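/- arXiv:2603.03093 — 2 statements merged into one kernel-verified Lean document; each statement's English description precedes it below -/
import Mathlib

section
/- Let A, B ∈ ℂ with conj(A)·B = −(1 + |A|²), and φ_0 = A + B, φ_n = B for n ≥ 1, with induced inner product ⟨·,·⟩_b on polynomials. Then A ≠ 0, ‖1‖_b² = 1 + 1/|A|², and for every n ≥ 1, ‖z^{n−1}(z−1)‖_b² = (|A| + 1/|A|)². -/
/-!
The hypothesis says `conj A * (A + B) = -1`, so `φ₀ = A + B` has norm `1 / ‖A‖`. For a sequence
that is constant from index 1 on, the Gram entries `⟨z^j, z^j⟩_b` and `⟨z^j, z^(j+1)⟩_b` grow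
linearly in `j` with the same slope `‖φ₁‖²`, so in `‖z^m (z - 1)‖_b²` the dependence on `m`
cancels, leaving `2 + ‖φ₀‖² + ‖φ₀ - φ₁‖² = 2 + 1 / ‖A‖² + ‖A‖²`.
-/

open Finset Polynomial Complex

noncomputable def dbInner (φ : ℕ → ℂ) (j k : ℕ) : ℂ :=
  (if j = k then 1 else 0) +
    if j ≤ k then ∑ s ∈ Finset.range (j + 1), (starRingEnd ℂ) (φ s) * φ (k - j + s)
    else ∑ s ∈ Finset.range (k + 1), φ s * (starRingEnd ℂ) (φ (j - k + s))

noncomputable def polyInner (φ : ℕ → ℂ) (p q : Polynomial ℂ) : ℂ :=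
  ∑ j ∈ p.support, ∑ k ∈ q.support, p.coeff j * (starRingEnd ℂ) (q.coeff k) * dbInner φ j k

open ComplexConjugate

theorem polyInner_eq_sum_of_support_subset (φ : ℕ → ℂ) {p q : ℂ[X]} {s t : Finset ℕ}
    (hp : p.support ⊆ s) (hq : q.support ⊆ t) :
    polyInner φ p q = ∑ j ∈ s, ∑ k ∈ t, p.coeff j * conj (q.coeff k) * dbInner φ j k := by
  unfold polyInner
  refine Finset.sum_subset hp (fun j _ hj => ?_) |>.trans (Finset.sum_congr rfl fun j _ => ?_)
  · simp [Polynomial.notMem_support_iff.mp hj]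
  · exact Finset.sum_subset hq fun k _ hk => by simp [Polynomial.notMem_support_iff.mp hk]

theorem polyInner_one (φ : ℕ → ℂ) : polyInner φ 1 1 = ((1 + ‖φ 0‖ ^ 2 : ℝ) : ℂ) := by
  have h : (1 : ℂ[X]).support ⊆ {0} := by simpa using support_C_subset (1 : ℂ)
  simp [polyInner_eq_sum_of_support_subset φ h h, dbInner, conj_mul']

theorem coeff_X_pow_mul_X_sub_one {R : Type*} [Ring R] (m j : ℕ) :
    (X ^ m * (X - 1) : R[X]).coeff j = (if j = m + 1 then 1 else 0) - if j = m then 1 else 0 := by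
  rw [mul_sub, mul_one, ← pow_succ, coeff_sub, coeff_X_pow, coeff_X_pow]

theorem support_X_pow_mul_X_sub_one_subset {R : Type*} [Ring R] (m : ℕ) :
    (X ^ m * (X - 1) : R[X]).support ⊆ {m, m + 1} := by
  intro j hj
  rw [Polynomial.mem_support_iff] at hj
  contrapose! hj
  simp only [Finset.mem_insert, Finset.mem_singleton, not_or] at hj
  rw [coeff_X_pow_mul_X_sub_one, if_neg hj.2, if_neg hj.1, sub_zero]

theorem polyInner_X_pow_mul_X_sub_one (φ : ℕ → ℂ) (m : ℕ) :
    polyInner φ (X ^ m * (X - 1)) (X ^ m * (X - 1)) =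
      dbInner φ m m - dbInner φ m (m + 1) - dbInner φ (m + 1) m + dbInner φ (m + 1) (m + 1) := by
  have hsub := support_X_pow_mul_X_sub_one_subset (R := ℂ) m
  rw [polyInner_eq_sum_of_support_subset φ hsub hsub]
  simp only [Finset.sum_pair (Nat.succ_ne_self m).symm, coeff_X_pow_mul_X_sub_one, if_pos,
    if_neg (Nat.succ_ne_self m), if_neg (Nat.succ_ne_self m).symm, map_sub, map_one, map_zero]
  ring

def stepSeq (a b : ℂ) (n : ℕ) : ℂ := if n = 0 then a else b

theorem dbInner_stepSeq_self (a b : ℂ) (j : ℕ) :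
    dbInner (stepSeq a b) j j = 1 + conj a * a + j * (conj b * b) := by
  rw [dbInner, if_pos rfl, if_pos le_rfl, Nat.sub_self, sum_range_succ']
  simp only [stepSeq, Nat.add_eq_zero_iff, one_ne_zero, and_false, if_pos, if_neg,
    not_false_eq_true, sum_const, card_range, nsmul_eq_mul]
  ring

theorem dbInner_stepSeq_succ_right (a b : ℂ) (j : ℕ) :
    dbInner (stepSeq a b) j (j + 1) = conj a * b + j * (conj b * b) := by
  rw [dbInner, if_neg (Nat.succ_ne_self j).symm, if_pos (Nat.le_succ j), Nat.add_sub_cancel_left,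
    sum_range_succ']
  simp only [stepSeq, Nat.add_eq_zero_iff, one_ne_zero, and_false, false_and, if_pos, if_neg,
    not_false_eq_true, sum_const, card_range, nsmul_eq_mul]
  ring

theorem dbInner_stepSeq_succ_left (a b : ℂ) (j : ℕ) :
    dbInner (stepSeq a b) (j + 1) j = a * conj b + j * (b * conj b) := by
  rw [dbInner, if_neg (Nat.succ_ne_self j), if_neg (Nat.not_succ_le_self j), Nat.add_sub_cancel_left,
    sum_range_succ']
  simp only [stepSeq, Nat.add_eq_zero_iff, one_ne_zero, and_false, false_and, if_pos, if_neg,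
    not_false_eq_true, sum_const, card_range, nsmul_eq_mul]
  ring

theorem polyInner_stepSeq_X_pow_mul_X_sub_one (a b : ℂ) (m : ℕ) :
    polyInner (stepSeq a b) (X ^ m * (X - 1)) (X ^ m * (X - 1)) =
      ((2 + ‖a‖ ^ 2 + ‖a - b‖ ^ 2 : ℝ) : ℂ) := by
  rw [polyInner_X_pow_mul_X_sub_one, dbInner_stepSeq_self, dbInner_stepSeq_self,
    dbInner_stepSeq_succ_right, dbInner_stepSeq_succ_left]
  push_cast
  rw [← conj_mul' a, ← conj_mul' (a - b), map_sub]
  ring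

theorem norm_mul_norm_add_eq_one {A B : ℂ} (h : conj A * B = -(1 + (‖A‖ : ℂ) ^ 2)) :
    ‖A‖ * ‖A + B‖ = 1 := by
  have hAB : conj A * (A + B) = -1 := by
    rw [mul_add, h, conj_mul']
    ring
  simpa using congrArg norm hAB

/-- If conj(A)B = -(1+|A|²) then A ≠ 0, ‖1‖_b² = 1 + 1/|A|², and
‖z^{n-1}(z-1)‖_b² = (|A| + 1/|A|)² for all n ≥ 1. -/
theorem stmt4 (A B : ℂ) (h : (starRingEnd ℂ) A * B = -(1 + (‖A‖ : ℂ) ^ 2)) :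
    A ≠ 0 ∧
    polyInner (fun n => if n = 0 then A + B else B) 1 1
      = ((1 + 1 / ‖A‖ ^ 2 : ℝ) : ℂ) ∧
    ∀ n : ℕ, 1 ≤ n →
      polyInner (fun n => if n = 0 then A + B else B)
          (X ^ (n - 1) * (X - 1)) (X ^ (n - 1) * (X - 1))
        = (((‖A‖ + 1 / ‖A‖) ^ 2 : ℝ) : ℂ) := by
  have hmul := norm_mul_norm_add_eq_one h
  have hA : A ≠ 0 := by
    rintro rfl
    simp at hmul
  have hnorm : ‖A + B‖ = ‖A‖⁻¹ := eq_inv_of_mul_eq_one_right hmul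
  rw [show (fun n => if n = 0 then A + B else B) = stepSeq (A + B) B from rfl]
  refine ⟨hA, ?_, fun n hn => ?_⟩
  · rw [polyInner_one]
    simp only [stepSeq, if_pos, hnorm, one_div, inv_pow]
  · obtain ⟨m, rfl⟩ := Nat.exists_eq_add_of_le' hn
    rw [Nat.add_sub_cancel, polyInner_stepSeq_X_pow_mul_X_sub_one, add_sub_cancel_right, hnorm]
    have hA' : ‖A‖ ≠ 0 := norm_ne_zero_iff.mpr hA
    congr 1
    field_simp
    ring
end

section
/- Let (φ_n) be a sequence of complex numbers, N ≥ 1, and define φ̃_k = φ_{k/N} if N | k, φ̃_k = 0 otherwise. If p(z) = Σ_{k=0}^{l} c_k z^k is any polynomial and 0 ≤ i < N, then ‖z^i·p(z^N)‖_{b̃}² = ‖p‖_b², where the norms come from the inner products induced by (φ̃_n) and (φ_n) respectively. -/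
open Finset Polynomial Complex

lemma polyInner_eq_sum (φ : ℕ → ℂ) (p q : Polynomial ℂ) (S T : Finset ℕ)
    (hS : p.support ⊆ S) (hT : q.support ⊆ T) :
    polyInner φ p q
      = ∑ j ∈ S, ∑ k ∈ T, p.coeff j * (starRingEnd ℂ) (q.coeff k) * dbInner φ j k := by
  unfold polyInner
  rw [Finset.sum_subset hS (fun j _ hj => Finset.sum_eq_zero fun k _ => by
    simp [Polynomial.notMem_support_iff.mp hj])]
  exact Finset.sum_congr rfl fun j _ => Finset.sum_subset hT fun k _ hk => by
    simp [Polynomial.notMem_support_iff.mp hk]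

lemma sum_mul_range (N i j : ℕ) (hN : 1 ≤ N) (hi : i < N) (F : ℕ → ℂ)
    (hF : ∀ s, ¬ N ∣ s → F s = 0) :
    ∑ s ∈ Finset.range (N * j + i + 1), F s = ∑ t ∈ Finset.range (j + 1), F (N * t) := by
  have himg := Finset.sum_image (s := Finset.range (j + 1)) (f := F) (g := fun t => N * t)
    (fun a _ b _ h => Nat.eq_of_mul_eq_mul_left hN h)
  rw [← himg]
  symm
  apply Finset.sum_subset
  · intro s hs
    obtain ⟨t, ht, rfl⟩ := Finset.mem_image.mp hs
    rw [Finset.mem_range] at ht ⊢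
    have : N * t ≤ N * j := Nat.mul_le_mul_left N (by omega)
    omega
  · intro s hs hns
    by_cases hd : N ∣ s
    · obtain ⟨t, rfl⟩ := hd
      exfalso
      apply hns
      refine Finset.mem_image.mpr ⟨t, ?_, rfl⟩
      rw [Finset.mem_range] at hs ⊢
      have h1 : N * t < N * (j + 1) := by
        have : N * j + i + 1 ≤ N * (j + 1) := by
          rw [Nat.mul_add, Nat.mul_one]; omega
        omega
      exact Nat.lt_of_mul_lt_mul_left h1
    · exact hF s hd

lemma dbInner_scale (φ : ℕ → ℂ) (N : ℕ) (hN : 1 ≤ N) (i : ℕ) (hi : i < N) (j k : ℕ) :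
    dbInner (fun m => if N ∣ m then φ (m / N) else 0) (N * j + i) (N * k + i)
      = dbInner φ j k := by
  have hNpos : 0 < N := hN
  have heq : ∀ a b : ℕ, (N * a + i = N * b + i) ↔ a = b := fun a b =>
    ⟨fun h => Nat.eq_of_mul_eq_mul_left hNpos (Nat.add_right_cancel h), fun h => by rw [h]⟩
  have hle : ∀ a b : ℕ, (N * a + i ≤ N * b + i) ↔ a ≤ b := fun a b =>
    ⟨fun h => Nat.le_of_mul_le_mul_left (Nat.le_of_add_le_add_right h) hNpos,
     fun h => Nat.add_le_add_right (Nat.mul_le_mul_left N h) i⟩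
  have hval : ∀ t : ℕ, (if N ∣ N * t then φ ((N * t) / N) else 0) = φ t := fun t => by
    rw [if_pos (Dvd.intro t rfl), Nat.mul_div_cancel_left t hNpos]
  unfold dbInner
  rcases le_or_gt j k with hjk | hjk
  · rw [if_pos ((hle j k).mpr hjk), if_pos hjk]
    congr 1
    · simp only [heq j k]
    · have hsub : N * k + i - (N * j + i) = N * (k - j) := by
        rw [Nat.mul_sub]; omega
      rw [hsub, sum_mul_range N i j hN hi _ (fun s hs => by simp [hs])]
      refine Finset.sum_congr rfl fun t _ => ?_
      have h2 : N * (k - j) + N * t = N * ((k - j) + t) := by rw [Nat.mul_add]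
      simp only [h2, hval]
  · rw [if_neg (fun h => absurd ((hle j k).mp h) (not_le.mpr hjk)),
        if_neg (not_le.mpr hjk)]
    congr 1
    · simp only [heq j k]
    · have hsub : N * j + i - (N * k + i) = N * (j - k) := by
        rw [Nat.mul_sub]; omega
      rw [hsub, sum_mul_range N i k hN hi _ (fun s hs => by simp [hs])]
      refine Finset.sum_congr rfl fun t _ => ?_
      have h2 : N * (j - k) + N * t = N * ((j - k) + t) := by rw [Nat.mul_add]
      simp only [h2, hval]

/-- For φ̃ the coefficient sequence of φ(z^N):
‖z^i · p(z^N)‖_{b̃}² = ‖p‖_b² for any polynomial p and 0 ≤ i < N. -/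
theorem stmt8 (φ : ℕ → ℂ) (N : ℕ) (hN : 1 ≤ N) (p : Polynomial ℂ) (i : ℕ) (hi : i < N) :
    polyInner (fun m => if N ∣ m then φ (m / N) else 0)
        (X ^ i * p.comp (X ^ N)) (X ^ i * p.comp (X ^ N))
      = polyInner φ p p := by
  have hNpos : 0 < N := hN
  set f : ℕ → ℂ := fun m => if N ∣ m then φ (m / N) else 0 with hf
  set q : Polynomial ℂ := X ^ i * p.comp (X ^ N) with hq
  have hcomp : p.comp (X ^ N) = expand ℂ N p := Eq.symm (expand_eq_comp_X_pow N)
  have hcoeff : ∀ k, q.coeff (N * k + i) = p.coeff k := by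
    intro k
    rw [hq, hcomp, show N * k + i = (N * k) + i from rfl, coeff_X_pow_mul,
      coeff_expand_mul' hNpos]
  have hcoeff' : ∀ m, i ≤ m → N ∣ (m - i) → q.coeff m = p.coeff ((m - i) / N) := by
    intro m him hdvd
    rw [hq, hcomp, coeff_X_pow_mul', if_pos him, coeff_expand hNpos, if_pos hdvd]
  have hsupp : q.support ⊆ (Finset.range (p.natDegree + 1)).image (fun k => N * k + i) := by
    intro m hm
    have hm0 : q.coeff m ≠ 0 := Polynomial.mem_support_iff.mp hm
    have hqm : q.coeff m = if i ≤ m then (if N ∣ (m - i) then p.coeff ((m - i) / N) else 0)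
        else 0 := by
      rw [hq, hcomp, coeff_X_pow_mul']
      by_cases h1 : i ≤ m
      · simp only [if_pos h1, coeff_expand hNpos]
      · simp [h1]
    rw [hqm] at hm0
    split_ifs at hm0 with h1 h2
    · refine Finset.mem_image.mpr ⟨(m - i) / N, ?_, ?_⟩
      · rw [Finset.mem_range]
        exact Nat.lt_succ_of_le (Polynomial.le_natDegree_of_ne_zero hm0)
      · obtain ⟨t, ht⟩ := h2
        rw [ht, Nat.mul_div_cancel_left t hNpos]
        omega
    · exact absurd rfl hm0
    · exact absurd rfl hm0
  have hinj : ∀ a ∈ Finset.range (p.natDegree + 1), ∀ b ∈ Finset.range (p.natDegree + 1),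
      N * a + i = N * b + i → a = b := fun a _ b _ h =>
    Nat.eq_of_mul_eq_mul_left hNpos (Nat.add_right_cancel h)
  have hpsupp : p.support ⊆ Finset.range (p.natDegree + 1) := fun k hk =>
    Finset.mem_range.mpr (Nat.lt_succ_of_le (Polynomial.le_natDegree_of_mem_supp k hk))
  rw [polyInner_eq_sum f q q _ _ hsupp hsupp,
      polyInner_eq_sum φ p p _ _ hpsupp hpsupp,
      Finset.sum_image hinj]
  refine Finset.sum_congr rfl fun j _ => ?_
  rw [Finset.sum_image hinj]
  refine Finset.sum_congr rfl fun k _ => ?_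
  rw [hcoeff j, hcoeff k, dbInner_scale φ N hN i hi j k]
end
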